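/- Let G = GSO_10 over a field, with standard parabolic Q having Levi GL_3 × GSO_4 and unipotent radical U(Q). Let V be the subgroup of upper-triangular unipotent matrices generated by the root subgroups x_1(r) = I + r e'_{1,2}, x_2(r) = I + r e'_{2,5}, x_3(r) = I + r e'_{2,6} and the other root subgroups in the unipotent radical attached to the (GL_1² × GSO_6)-parabolic, with character ψ_{V,a}(v) = ψ(v_{1,2} + v_{2,5} + a v_{2,6}) for a ≠ 0. Then no Weyl group element w of G satisfies w x_i(r) w^{-1} ⊂ U(Q)^− \ [U(Q)^−, U(Q)^−] simultaneously for i = 1, 2, 3; consequently every double coset in Q \ G / V is non-admissible for ψ_{V,a}. -/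

import Mathlib

open Matrix

/-!
Non-admissibility of double cosets `Q \ GSO₁₀ / V` (Lemma 3 of the paper).

`G = GSO₁₀` is the split similitude orthogonal group of the antidiagonal form
`J₁₀` (0-indexed; the pairing sends an index `i` to `9 − i = Fin.rev i`).  The
Weyl elements of `G` are represented by the permutation matrices `P_w` for
permutations `w` of the 10 coordinates commuting with the mirror `i ↦ 9 − i`.
With `e'_{i,j} = e_{i,j} − e_{9−j,9−i}` (0-indexed), the three root subgroups
carrying the character `ψ_{V,a}` are `x₁(r) = I + r e'_{0,1}`,
`x₂(r) = I + r e'_{1,4}`, `x₃(r) = I + r e'_{1,5}`.  `Q` is the standard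
parabolic with Levi `GL₃ × GSO₄` (block sizes `3,4,3`), `U(Q)⁻` its opposite
unipotent radical.  Claims: no Weyl element `w` conjugates all three root
subgroups into `U(Q)⁻ ∖ [U(Q)⁻, U(Q)⁻]`; and for every `w`, at least one of
the three conjugated root subgroups lands in `Q`, i.e. every double coset is
non-admissible for `ψ_{V,a}`.
-/

/-- Block index for the `(3,4,3)` decomposition defining the parabolic `Q`. -/
def blkQ (i : Fin 10) : ℕ := if (i : ℕ) < 3 then 0 else if (i : ℕ) < 7 then 1 else 2

variable {F : Type*} [Field F]

/-- `e'_{i,j} = e_{i,j} − e_{9−j,9−i}`. -/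
def E' (F : Type*) [Field F] (i j : Fin 10) : Matrix (Fin 10) (Fin 10) F :=
  Matrix.single i j 1 - Matrix.single j.rev i.rev 1

/-- The three root subgroups on which `ψ_{V,a}` is nontrivial. -/
def xRoot (F : Type*) [Field F] : Fin 3 → F → Matrix (Fin 10) (Fin 10) F
  | 0, r => 1 + r • E' F 0 1
  | 1, r => 1 + r • E' F 1 4
  | 2, r => 1 + r • E' F 1 5

/-- The permutation matrix of a Weyl element. -/
def permMat (F : Type*) [Field F] (w : Equiv.Perm (Fin 10)) : Matrix (Fin 10) (Fin 10) F :=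
  Matrix.of fun i j => if w j = i then 1 else 0

/-- Membership in the parabolic `Q` (block upper triangular for `(3,4,3)`). -/
def memQ (M : Matrix (Fin 10) (Fin 10) F) : Prop :=
  ∀ i j, blkQ j < blkQ i → M i j = 0

/-- Membership in the opposite unipotent radical `U(Q)⁻`. -/
def memUQminus (M : Matrix (Fin 10) (Fin 10) F) : Prop :=
  ∀ i j, blkQ i ≤ blkQ j → M i j = (1 : Matrix (Fin 10) (Fin 10) F) i j

/-- Membership in the commutator subgroup `[U(Q)⁻, U(Q)⁻]` (entries only in the
far block `(2,0)`). -/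
def memCommUQminus (M : Matrix (Fin 10) (Fin 10) F) : Prop :=
  ∀ i j, ¬(blkQ i = 2 ∧ blkQ j = 0) → M i j = (1 : Matrix (Fin 10) (Fin 10) F) i j

/-!
If `w` does not move the root `e'_{i,j}` to a descending pair of blocks, i.e.
`blkQ (w i) ≤ blkQ (w j)`, then `w x(r) w⁻¹` lies in `Q`, and its entry `r` at `(w i, w j)`
sits in a block where `U(Q)⁻` has zeros. Because `w` commutes with the mirror `i ↦ 9 − i`,
one of the three roots `x₁, x₂, x₃` is always of this kind.
-/

lemma permMat_mul_mul_transpose_apply (w : Equiv.Perm (Fin 10))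
    (M : Matrix (Fin 10) (Fin 10) F) (a b : Fin 10) :
    (permMat F w * M * (permMat F w)ᵀ) a b = M (w⁻¹ a) (w⁻¹ b) := by
  simp only [Matrix.mul_apply, Matrix.transpose_apply, permMat, Matrix.of_apply,
    ← Equiv.Perm.eq_inv_iff_eq, ite_mul, one_mul, zero_mul, mul_ite, mul_one, mul_zero,
    Finset.sum_ite_eq', Finset.mem_univ, if_true]

lemma one_add_smul_E'_apply (i j : Fin 10) (r : F) (a b : Fin 10) :
    (1 + r • E' F i j) a b = (if a = b then 1 else 0)
      + r * ((if i = a ∧ j = b then 1 else 0) - (if j.rev = a ∧ i.rev = b then 1 else 0)) := by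
  simp only [Matrix.add_apply, Matrix.smul_apply, E', Matrix.sub_apply, Matrix.one_apply,
    Matrix.single, Matrix.of_apply, smul_eq_mul]

lemma blkQ_rev : ∀ i : Fin 10, blkQ i.rev = 2 - blkQ i := by decide

lemma blkQ_le_two : ∀ i : Fin 10, blkQ i ≤ 2 := by decide

section RootSubgroup

variable (w : Equiv.Perm (Fin 10)) {i j : Fin 10}

/-- The reflected entry at `(j.rev, i.rev)` is harmless because `blkQ ∘ rev = 2 - blkQ`
reverses the block order. -/
lemma memQ_conj_one_add_smul_E' (hw : ∀ i, w i.rev = (w i).rev)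
    (hij : blkQ (w i) ≤ blkQ (w j)) (r : F) :
    memQ (permMat F w * (1 + r • E' F i j) * (permMat F w)ᵀ) := by
  intro a b hab
  obtain ⟨a, rfl⟩ := w.surjective a
  obtain ⟨b, rfl⟩ := w.surjective b
  simp only [permMat_mul_mul_transpose_apply, Equiv.Perm.coe_inv, Equiv.symm_apply_apply,
    one_add_smul_E'_apply]
  have hab' : a ≠ b := by rintro rfl; exact lt_irrefl _ hab
  have hdirect : ¬(i = a ∧ j = b) := by
    rintro ⟨rfl, rfl⟩
    omega
  have hreflected : ¬(j.rev = a ∧ i.rev = b) := by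
    rintro ⟨rfl, rfl⟩
    rw [hw, hw, blkQ_rev, blkQ_rev] at hab
    have := blkQ_le_two (w i)
    have := blkQ_le_two (w j)
    omega
  simp [hab', hdirect, hreflected]

lemma conj_one_add_smul_E'_apply_self (hne : i ≠ j) (hne_rev : j ≠ i.rev) (r : F) :
    (permMat F w * (1 + r • E' F i j) * (permMat F w)ᵀ) (w i) (w j) = r := by
  have hreflected : ¬(j.rev = i ∧ i.rev = j) := fun h => hne_rev h.2.symm
  rw [permMat_mul_mul_transpose_apply, Equiv.Perm.coe_inv, Equiv.symm_apply_apply,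
    Equiv.symm_apply_apply, one_add_smul_E'_apply, if_neg hne, if_pos ⟨rfl, rfl⟩,
    if_neg hreflected]
  ring

lemma not_memUQminus_conj_one_add_smul_E' (hne : i ≠ j) (hne_rev : j ≠ i.rev)
    (hij : blkQ (w i) ≤ blkQ (w j)) {r : F} (hr : r ≠ 0) :
    ¬ memUQminus (permMat F w * (1 + r • E' F i j) * (permMat F w)ᵀ) := by
  intro hU
  have h := hU (w i) (w j) hij
  rw [conj_one_add_smul_E'_apply_self w hne hne_rev,
    Matrix.one_apply_ne (w.injective.ne hne)] at h
  exact hr h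

end RootSubgroup

def rootL : Fin 3 → Fin 10
  | 0 => 0 | 1 => 1 | 2 => 1

def rootR : Fin 3 → Fin 10
  | 0 => 1 | 1 => 4 | 2 => 5

lemma xRoot_eq (k : Fin 3) (r : F) : xRoot F k r = 1 + r • E' F (rootL k) (rootR k) := by
  fin_cases k <;> rfl

lemma rootL_ne_rootR : ∀ k, rootL k ≠ rootR k := by decide

lemma rootR_ne_rev_rootL : ∀ k, rootR k ≠ (rootL k).rev := by decide

/-- Since `w 5 = (w 4).rev`, the roots `x₂` and `x₃` can both descend only if `w 1` lies in
the last block, and then `x₁` cannot descend. -/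
lemma exists_blkQ_rootL_le_rootR (w : Equiv.Perm (Fin 10)) (hw : ∀ i, w i.rev = (w i).rev) :
    ∃ k : Fin 3, blkQ (w (rootL k)) ≤ blkQ (w (rootR k)) := by
  have h5 : w 5 = (w 4).rev := hw 4
  have := blkQ_le_two (w 0)
  have := blkQ_le_two (w 1)
  rcases (by omega : blkQ (w 0) ≤ blkQ (w 1) ∨ blkQ (w 1) ≤ blkQ (w 4) ∨
      blkQ (w 1) ≤ 2 - blkQ (w 4)) with h | h | h
  · exact ⟨0, h⟩
  · exact ⟨1, h⟩
  · exact ⟨2, by simpa [rootL, rootR, h5, blkQ_rev] using h⟩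

theorem no_admissible_weyl_element_GSO10 :
    ∀ w : Equiv.Perm (Fin 10), (∀ i, w i.rev = (w i).rev) →
      -- (a) `w` does not put all three root subgroups inside
      --     `U(Q)⁻ ∖ [U(Q)⁻, U(Q)⁻]` …
      (¬ ∀ (k : Fin 3) (r : F), r ≠ 0 →
          memUQminus (permMat F w * xRoot F k r * (permMat F w)ᵀ) ∧
          ¬ memCommUQminus (permMat F w * xRoot F k r * (permMat F w)ᵀ)) ∧
      -- (b) … and consequently some conjugated root subgroup lies in `Q`,
      --     so the double coset of `w` is non-admissible for `ψ_{V,a}`.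
      (∃ k : Fin 3, ∀ r : F, memQ (permMat F w * xRoot F k r * (permMat F w)ᵀ)) := by
  intro w hw
  obtain ⟨k, hk⟩ := exists_blkQ_rootL_le_rootR w hw
  refine ⟨fun hall => ?_, k, fun r => ?_⟩
  · have hU := (hall k 1 one_ne_zero).1
    rw [xRoot_eq] at hU
    exact not_memUQminus_conj_one_add_smul_E' w (rootL_ne_rootR k) (rootR_ne_rev_rootL k) hk
      one_ne_zero hU
  · rw [xRoot_eq]
    exact memQ_conj_one_add_smul_E' w hw hk r
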